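/- Let F be the fraction field of D inside Ω and n ≥ 1. Let S₁ and S₂ be finite subsets of F(x)[X,1/det(X)] (respectively, of F[X,1/det(X)]). If S₁ is contained in the radical of the ideal generated by S₂ in Ω(x)[X,1/det(X)] (respectively, in Ω[X,1/det(X)]), then there is a nonzero c ∈ D such that for every φ ∈ Hom_k(D,k̄) with φ(c) ≠ 0: every element p of S₁ ∪ S₂ specializes to a well-defined element φ(p) of k̄(x)[X,1/det(X)] (respectively, of k̄[X,1/det(X)]) — obtained by writing the coefficients of p as quotients of elements of D[x] (respectively, of D) whose denominators have nonzero image under φ and applying φ — and φ(S₁) is contained in the radical of the ideal generated by φ(S₂) in k̄(x)[X,1/det(X)] (respectively, in k̄[X,1/det(X)]). -/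

import Mathlib

set_option linter.unusedSectionVars false
set_option linter.unusedVariables false


noncomputable section MatrixLocalization

/-- The determinant of the generic `n × n` matrix `X = (X_{ij})`. -/
def detPoly (n : ℕ) (E : Type*) [CommRing E] : MvPolynomial (Fin n × Fin n) E :=
  (Matrix.of fun i j : Fin n => MvPolynomial.X (i, j)).det

/-- The ring `E[X, 1/det(X)]`. -/
abbrev MatrixLoc (n : ℕ) (E : Type*) [CommRing E] := Localization.Away (detPoly n E)

theorem map_detPoly {E E' : Type*} [CommRing E] [CommRing E'] (n : ℕ) (u : E →+* E') :
    MvPolynomial.map u (detPoly n E) = detPoly n E' := by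
  simp only [detPoly, RingHom.map_det]
  congr 1
  ext i j
  simp [Matrix.map_apply]

/-- The canonical map `A[X] → E[X,1/det(X)]` induced by `g : A →+* E` on coefficients. -/
def toML {A E : Type*} [CommRing A] [CommRing E] (n : ℕ) (g : A →+* E) :
    MvPolynomial (Fin n × Fin n) A →+* MatrixLoc n E :=
  (algebraMap (MvPolynomial (Fin n × Fin n) E) (MatrixLoc n E)).comp (MvPolynomial.map g)

/-- The ring homomorphism `E[X,1/det(X)] → E'[X,1/det(X)]` induced by `u : E →+* E'`. -/
def MatrixLocMap {E E' : Type*} [CommRing E] [CommRing E'] (n : ℕ) (u : E →+* E') :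
    MatrixLoc n E →+* MatrixLoc n E' :=
  Localization.awayLift (toML n u) (detPoly n E) (by
    have h : toML n u (detPoly n E)
        = algebraMap (MvPolynomial (Fin n × Fin n) E') (MatrixLoc n E') (detPoly n E') := by
      simp [toML, map_detPoly n u]
    rw [h]
    exact IsLocalization.Away.algebraMap_isUnit _)

/-- `p ∈ Frac(A)[X,1/det(X)]` specializes, along `σ : A →+* B`, to the well-defined element
`y ∈ B[X,1/det(X)]`: `p` can be written with numerator a polynomial over `A` and denominator
`b·det(X)^N` with `b ∈ A` whose image under `σ` is nonzero, and `y` is the corresponding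
quotient of the images. -/
def SpecTo {A B : Type*} [CommRing A] [IsDomain A] [CommRing B] (n : ℕ) (σ : A →+* B)
    (p : MatrixLoc n (FractionRing A)) (y : MatrixLoc n B) : Prop :=
  ∃ (P : MvPolynomial (Fin n × Fin n) A) (b : A) (N : ℕ),
    b ≠ 0 ∧ σ b ≠ 0 ∧
    p * toML n (algebraMap A (FractionRing A)) (MvPolynomial.C b * detPoly n A ^ N)
      = toML n (algebraMap A (FractionRing A)) P ∧
    y * toML n σ (MvPolynomial.C b * detPoly n A ^ N) = toML n σ P

end MatrixLocalization

noncomputable section Embeddings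

variable {Ω k : Type*} [Field Ω] [Field k] [Algebra k Ω] (D : Subalgebra k Ω)

theorem algebraMap_subalgebra_injective : Function.Injective (algebraMap ↥D Ω) :=
  Subtype.val_injective

/-- The embedding `F = Frac(D) → Ω`. -/
def embF : FractionRing ↥D →+* Ω :=
  IsFractionRing.lift (g := algebraMap ↥D Ω) (algebraMap_subalgebra_injective D)

/-- The embedding `F(x) = Frac(D[x]) → Ω(x) = Frac(Ω[x])`. -/
def embFx : FractionRing (Polynomial ↥D) →+* FractionRing (Polynomial Ω) :=
  IsFractionRing.lift
    (g := (algebraMap (Polynomial Ω) (FractionRing (Polynomial Ω))).comp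
      (Polynomial.mapRingHom (algebraMap ↥D Ω)))
    ((IsFractionRing.injective (Polynomial Ω) (FractionRing (Polynomial Ω))).comp
      (Polynomial.map_injective _ (algebraMap_subalgebra_injective D)))

/-- The induced embedding `F[X,1/det(X)] → Ω[X,1/det(X)]`. -/
def embML (n : ℕ) : MatrixLoc n (FractionRing ↥D) →+* MatrixLoc n Ω :=
  MatrixLocMap n (embF D)

/-- The induced embedding `F(x)[X,1/det(X)] → Ω(x)[X,1/det(X)]`. -/
def embMLx (n : ℕ) :
    MatrixLoc n (FractionRing (Polynomial ↥D)) →+* MatrixLoc n (FractionRing (Polynomial Ω)) :=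
  MatrixLocMap n (embFx D)

end Embeddings

/-!
`Ω[X, 1/det X]` is the base change of `F[X, 1/det X]` along the field extension `F → Ω`, hence
faithfully flat over it, so extended ideals contract back: the hypothesis already gives
`p ^ m = ∑ f_q q` over `F` for each `p ∈ S₁`. Every element of `F[X, 1/det X]` has a denominator
`b · det(X) ^ N` with `0 ≠ b ∈ D`; let `c` be the product of these `b` over the finitely many
`p`, `q`, `f_q` involved. When `φ c ≠ 0`, specialization along `φ` is well defined, additive and
multiplicative on these elements, so the relation `p ^ m = ∑ f_q q` specializes. Over `F(x)` the
same argument gives `c ∈ D[x]`, and its leading coefficient does the job.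
-/

open MvPolynomial

theorem Module.FaithfullyFlat.of_isPushout (R S R' S' : Type*) [CommRing R] [CommRing S]
    [CommRing R'] [CommRing S'] [Algebra R S] [Algebra R R'] [Algebra R S'] [Algebra S S']
    [Algebra R' S'] [IsScalarTower R S S'] [IsScalarTower R R' S'] [Algebra.IsPushout R S R' S']
    [Module.FaithfullyFlat R R'] : Module.FaithfullyFlat S S' :=
  .of_linearEquiv _ _ (Algebra.IsPushout.equiv R S R' S').symm.toLinearEquiv

theorem RingHom.FaithfullyFlat.mem_radical_span_of_map_mem {R S : Type*} [CommRing R] [CommRing S]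
    {f : R →+* S} (hf : f.FaithfullyFlat) {s : Set R} {p : R}
    (h : f p ∈ (Ideal.span (f '' s)).radical) : p ∈ (Ideal.span s).radical := by
  algebraize [f]
  rw [← Ideal.comap_map_eq_self_of_faithfullyFlat (B := S) (Ideal.span s), ← Ideal.comap_radical,
    Ideal.mem_comap, Ideal.map_span]
  exact h

section MatrixLoc

variable {E E' : Type*} [CommRing E] [CommRing E'] {n : ℕ}

theorem detPoly_ne_zero [Nontrivial E] : detPoly n E ≠ 0 :=
  Matrix.det_mvPolynomialX_ne_zero (Fin n) E

theorem algebraMap_matrixLoc_injective [IsDomain E] :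
    Function.Injective (algebraMap (MvPolynomial (Fin n × Fin n) E) (MatrixLoc n E)) :=
  IsLocalization.injective _ (powers_le_nonZeroDivisors_of_noZeroDivisors detPoly_ne_zero)

theorem toML_injective [IsDomain E'] {u : E →+* E'} (hu : Function.Injective u) :
    Function.Injective (toML n u) :=
  algebraMap_matrixLoc_injective.comp (map_injective u hu)

theorem C_mul_detPoly_pow_add (b c : E) (N M : ℕ) :
    C (b * c) * detPoly n E ^ (N + M) = C b * detPoly n E ^ N * (C c * detPoly n E ^ M) := by
  rw [C_mul, pow_add]
  ring

theorem toML_C_mul_detPoly_pow (u : E →+* E') (b : E) (N : ℕ) :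
    toML n u (C b * detPoly n E ^ N)
      = algebraMap _ (MatrixLoc n E') (C (u b) * detPoly n E' ^ N) := by
  simp [toML, map_detPoly]

theorem isUnit_toML_C_mul_detPoly_pow {K : Type*} [Field K] (u : E →+* K) {b : E} (hb : u b ≠ 0)
    (N : ℕ) : IsUnit (toML n u (C b * detPoly n E ^ N)) := by
  rw [toML_C_mul_detPoly_pow, map_mul, map_pow]
  exact ((hb.isUnit.map C).map _).mul ((IsLocalization.Away.algebraMap_isUnit _).pow N)

theorem matrixLocMap_algebraMap (u : E →+* E') (P : MvPolynomial (Fin n × Fin n) E) :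
    MatrixLocMap n u (algebraMap _ (MatrixLoc n E) P) = toML n u P := by
  rw [MatrixLocMap, Localization.awayLift]
  exact IsLocalization.Away.lift_eq _ _ P

attribute [local instance] algebraMvPolynomial in
theorem faithfullyFlat_matrixLocMap {F K : Type*} [Field F] [Field K] (n : ℕ) (u : F →+* K) :
    (MatrixLocMap n u).FaithfullyFlat := by
  let _ := u.toAlgebra
  let _ : Algebra (MatrixLoc n F) (MatrixLoc n K) := (MatrixLocMap n u).toAlgebra
  have : Module.FaithfullyFlat (MvPolynomial (Fin n × Fin n) F) (MvPolynomial (Fin n × Fin n) K) :=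
    .of_isPushout F _ K _
  have : IsScalarTower (MvPolynomial (Fin n × Fin n) F) (MatrixLoc n F) (MatrixLoc n K) :=
    .of_algebraMap_eq fun P => (matrixLocMap_algebraMap u P).symm
  have : IsLocalization (Algebra.algebraMapSubmonoid (MvPolynomial (Fin n × Fin n) K)
      (Submonoid.powers (detPoly n F))) (MatrixLoc n K) := by
    rw [Algebra.algebraMapSubmonoid, Submonoid.map_powers]
    exact (map_detPoly n u).symm ▸ Localization.isLocalization
  have : Algebra.IsPushout (MvPolynomial (Fin n × Fin n) F) (MatrixLoc n F)
      (MvPolynomial (Fin n × Fin n) K) (MatrixLoc n K) :=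
    (Algebra.isPushout_of_isLocalization (Submonoid.powers (detPoly n F)) _ _ _).symm
  exact RingHom.faithfullyFlat_algebraMap_iff.mpr (.of_isPushout (MvPolynomial (Fin n × Fin n) F) _
    (MvPolynomial (Fin n × Fin n) K) _)

end MatrixLoc

section Specialization

variable {A B : Type*} [CommRing A] [IsDomain A] [CommRing B] {n : ℕ}

attribute [local instance] algebraMvPolynomial in
theorem exists_mul_toML_eq_toML (z : MatrixLoc n (FractionRing A)) :
    ∃ (P : MvPolynomial (Fin n × Fin n) A) (b : A) (N : ℕ), b ≠ 0 ∧
      z * toML n (algebraMap A (FractionRing A)) (C b * detPoly n A ^ N)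
        = toML n (algebraMap A (FractionRing A)) P := by
  obtain ⟨⟨W, _, N, rfl⟩, hW⟩ :=
    IsLocalization.surj (Submonoid.powers (detPoly n (FractionRing A))) z
  obtain ⟨⟨P, _, b, hb, rfl⟩, hP⟩ :=
    IsLocalization.surj ((nonZeroDivisors A).map (C (σ := Fin n × Fin n))) W
  refine ⟨P, b, N, nonZeroDivisors.ne_zero hb, ?_⟩
  rw [algebraMap_def, map_C] at hP
  rw [toML_C_mul_detPoly_pow, toML, RingHom.comp_apply, ← hP, mul_comm (C _), map_mul, map_mul,
    ← mul_assoc, hW]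

theorem specTo_toML [Nontrivial B] (σ : A →+* B) (P : MvPolynomial (Fin n × Fin n) A) :
    SpecTo n σ (toML n (algebraMap A (FractionRing A)) P) (toML n σ P) :=
  ⟨P, 1, 0, one_ne_zero, by simp, by simp, by simp⟩

namespace SpecTo

variable {σ : A →+* B} {p q : MatrixLoc n (FractionRing A)} {y z : MatrixLoc n B}

theorem zero [Nontrivial B] : SpecTo n σ 0 0 := by
  simpa using specTo_toML σ 0

theorem one [Nontrivial B] : SpecTo n σ 1 1 := by
  simpa using specTo_toML σ 1

theorem add [NoZeroDivisors B] (hp : SpecTo n σ p y) (hq : SpecTo n σ q z) :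
    SpecTo n σ (p + q) (y + z) := by
  obtain ⟨P, b, N, hb, hσb, hP, hy⟩ := hp
  obtain ⟨Q, c, M, hc, hσc, hQ, hz⟩ := hq
  refine ⟨P * (C c * detPoly n A ^ M) + Q * (C b * detPoly n A ^ N), b * c, N + M,
    mul_ne_zero hb hc, by simpa using mul_ne_zero hσb hσc, ?_, ?_⟩ <;>
    rw [C_mul_detPoly_pow_add, map_mul, map_add, map_mul _ P, map_mul _ Q]
  · linear_combination toML n (algebraMap A (FractionRing A)) (C c * detPoly n A ^ M) * hP
      + toML n (algebraMap A (FractionRing A)) (C b * detPoly n A ^ N) * hQ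
  · linear_combination toML n σ (C c * detPoly n A ^ M) * hy
      + toML n σ (C b * detPoly n A ^ N) * hz

theorem mul [NoZeroDivisors B] (hp : SpecTo n σ p y) (hq : SpecTo n σ q z) :
    SpecTo n σ (p * q) (y * z) := by
  obtain ⟨P, b, N, hb, hσb, hP, hy⟩ := hp
  obtain ⟨Q, c, M, hc, hσc, hQ, hz⟩ := hq
  refine ⟨P * Q, b * c, N + M, mul_ne_zero hb hc, by simpa using mul_ne_zero hσb hσc, ?_, ?_⟩ <;>
    rw [C_mul_detPoly_pow_add, map_mul, map_mul _ P, mul_mul_mul_comm]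
  · rw [hP, hQ]
  · rw [hy, hz]

theorem pow [IsDomain B] (hp : SpecTo n σ p y) (m : ℕ) : SpecTo n σ (p ^ m) (y ^ m) := by
  induction m with
  | zero => simpa using one
  | succ m ih => simpa [pow_succ] using ih.mul hp

theorem sum [IsDomain B] {ι : Type*} (s : Finset ι) {f : ι → MatrixLoc n (FractionRing A)}
    {g : ι → MatrixLoc n B} (h : ∀ i ∈ s, SpecTo n σ (f i) (g i)) :
    SpecTo n σ (∑ i ∈ s, f i) (∑ i ∈ s, g i) := by
  classical
  induction s using Finset.induction_on with
  | empty => simpa using zero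
  | insert i s hi ih =>
    rw [Finset.sum_insert hi, Finset.sum_insert hi]
    exact (h i (Finset.mem_insert_self i s)).add (ih fun j hj => h j (Finset.mem_insert_of_mem hj))

theorem unique {K : Type*} [Field K] {σ : A →+* K} {y z : MatrixLoc n K}
    (hy : SpecTo n σ p y) (hz : SpecTo n σ p z) : y = z := by
  obtain ⟨P, b, N, -, hσb, hP, hy⟩ := hy
  obtain ⟨Q, c, M, -, hσc, hQ, hz⟩ := hz
  have hPQ : P * (C c * detPoly n A ^ M) = Q * (C b * detPoly n A ^ N) := by
    apply toML_injective (IsFractionRing.injective A (FractionRing A))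
    rw [map_mul _ P, map_mul _ Q, ← hP, ← hQ]
    ring
  apply ((isUnit_toML_C_mul_detPoly_pow σ hσb N).mul
    (isUnit_toML_C_mul_detPoly_pow σ hσc M)).mul_right_cancel
  have hσPQ := congrArg (toML n σ) hPQ
  rw [map_mul _ P, map_mul _ Q, ← hy, ← hz] at hσPQ
  linear_combination hσPQ

end SpecTo

theorem exists_specTo {K : Type*} [Field K] (p : MatrixLoc n (FractionRing A)) :
    ∃ b : A, b ≠ 0 ∧ ∀ σ : A →+* K, σ b ≠ 0 → ∃ y, SpecTo n σ p y := by
  obtain ⟨P, b, N, hb, hP⟩ := exists_mul_toML_eq_toML p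
  refine ⟨b, hb, fun σ hσb => ?_⟩
  obtain ⟨u, hu⟩ := isUnit_toML_C_mul_detPoly_pow σ hσb N
  refine ⟨toML n σ P * (u⁻¹ : (MatrixLoc n K)ˣ), P, b, N, hb, hσb, hP, ?_⟩
  rw [← hu, Units.inv_mul_cancel_right]

theorem exists_forall_specTo (K : Type*) [Field K] (T : Finset (MatrixLoc n (FractionRing A))) :
    ∃ c : A, c ≠ 0 ∧ ∀ σ : A →+* K, σ c ≠ 0 →
      ∃ Φ : MatrixLoc n (FractionRing A) → MatrixLoc n K, ∀ p ∈ T, SpecTo n σ p (Φ p) := by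
  choose b hb hspec using fun p : MatrixLoc n (FractionRing A) => exists_specTo (K := K) p
  refine ⟨∏ p ∈ T, b p, Finset.prod_ne_zero_iff.mpr fun p _ => hb p, fun σ hσ => ?_⟩
  rw [map_prod] at hσ
  choose! Φ hΦ using fun p hp => hspec p σ (Finset.prod_ne_zero_iff.mp hσ p hp)
  exact ⟨Φ, hΦ⟩

theorem exists_specTo_mem_radical (K : Type*) [Field K]
    (S₁ S₂ : Finset (MatrixLoc n (FractionRing A)))
    (h : ∀ p ∈ S₁, p ∈ (Ideal.span (S₂ : Set (MatrixLoc n (FractionRing A)))).radical) :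
    ∃ c : A, c ≠ 0 ∧ ∀ σ : A →+* K, σ c ≠ 0 →
      ∃ Φ : MatrixLoc n (FractionRing A) → MatrixLoc n K,
        (∀ p ∈ (S₁ : Set _) ∪ (S₂ : Set _), SpecTo n σ p (Φ p)) ∧
        ∀ p ∈ S₁, Φ p ∈ (Ideal.span (Φ '' ↑S₂)).radical := by
  classical
  have hcomb : ∀ p ∈ S₁,
      ∃ (m : ℕ) (f : MatrixLoc n (FractionRing A) → MatrixLoc n (FractionRing A)),
        p ^ m = ∑ q ∈ S₂, f q * q := fun p hp => by
    obtain ⟨m, hm⟩ := h p hp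
    obtain ⟨f, -, hf⟩ := Submodule.mem_span_finset.mp hm
    exact ⟨m, f, hf.symm⟩
  choose! m f hf using hcomb
  obtain ⟨c, hc, hspec⟩ :=
    exists_forall_specTo K (S₁ ∪ S₂ ∪ (S₁ ×ˢ S₂).image fun pq => f pq.1 pq.2)
  refine ⟨c, hc, fun σ hσ => ?_⟩
  obtain ⟨Φ, hΦ⟩ := hspec σ hσ
  have hS : ∀ z ∈ S₁ ∪ S₂, SpecTo n σ z (Φ z) := fun z hz => hΦ z (Finset.mem_union_left _ hz)
  have hf' : ∀ p ∈ S₁, ∀ q ∈ S₂, SpecTo n σ (f p q) (Φ (f p q)) := fun p hp q hq =>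
    hΦ _ (Finset.mem_union_right _
      (Finset.mem_image_of_mem (fun pq => f pq.1 pq.2) (Finset.mk_mem_product hp hq)))
  refine ⟨Φ, fun p hp => hS p (by simpa using hp), fun p hp => ⟨m p, ?_⟩⟩
  have hpow := (hS p (Finset.mem_union_left _ hp)).pow (m p)
  have hsum := SpecTo.sum S₂ (f := fun q => f p q * q) (g := fun q => Φ (f p q) * Φ q)
    fun q hq => (hf' p hp q hq).mul (hS q (Finset.mem_union_right _ hq))
  rw [← hf p hp] at hsum
  rw [hpow.unique hsum]
  exact Ideal.sum_mem _ fun q hq => Ideal.mul_mem_left _ _ (Ideal.subset_span ⟨q, hq, rfl⟩)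

end Specialization

theorem radical_membership_specialization_general
    {Ω : Type*} [Field Ω]
    (k : Type*) [Field k] [Algebra k Ω]
    (kbar : Type*) [Field kbar] [Algebra k kbar]
    (D : Subalgebra k Ω) (n : ℕ) :
    -- version over `F(x)[X,1/det(X)]`
    (∀ S₁ S₂ : Finset (MatrixLoc n (FractionRing (Polynomial ↥D))),
      (∀ p ∈ S₁, embMLx D n p ∈ (Ideal.span (⇑(embMLx D n) '' ↑S₂)).radical) →
      ∃ c : ↥D, c ≠ 0 ∧ ∀ φ : ↥D →ₐ[k] kbar, φ c ≠ 0 →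
        ∃ Φ : MatrixLoc n (FractionRing (Polynomial ↥D))
            → MatrixLoc n (FractionRing (Polynomial kbar)),
          (∀ p ∈ (S₁ : Set _) ∪ (S₂ : Set _),
            SpecTo n ((algebraMap (Polynomial kbar) (FractionRing (Polynomial kbar))).comp
              (Polynomial.mapRingHom φ.toRingHom)) p (Φ p)) ∧
          ∀ p ∈ S₁, Φ p ∈ (Ideal.span (Φ '' ↑S₂)).radical) ∧
    -- version over `F[X,1/det(X)]`
    (∀ S₁ S₂ : Finset (MatrixLoc n (FractionRing ↥D)),
      (∀ p ∈ S₁, embML D n p ∈ (Ideal.span (⇑(embML D n) '' ↑S₂)).radical) →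
      ∃ c : ↥D, c ≠ 0 ∧ ∀ φ : ↥D →ₐ[k] kbar, φ c ≠ 0 →
        ∃ Φ : MatrixLoc n (FractionRing ↥D) → MatrixLoc n kbar,
          (∀ p ∈ (S₁ : Set _) ∪ (S₂ : Set _), SpecTo n φ.toRingHom p (Φ p)) ∧
          ∀ p ∈ S₁, Φ p ∈ (Ideal.span (Φ '' ↑S₂)).radical) := by
  refine ⟨fun S₁ S₂ h => ?_, fun S₁ S₂ h => ?_⟩
  · obtain ⟨c, hc, hspec⟩ := exists_specTo_mem_radical (FractionRing (Polynomial kbar)) S₁ S₂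
      fun p hp => (faithfullyFlat_matrixLocMap n _).mem_radical_span_of_map_mem (h p hp)
    refine ⟨c.leadingCoeff, Polynomial.leadingCoeff_ne_zero.mpr hc, fun φ hφ => hspec _ ?_⟩
    rw [RingHom.comp_apply, map_ne_zero_iff _ (IsFractionRing.injective _ _),
      Polynomial.coe_mapRingHom, ← Polynomial.leadingCoeff_ne_zero,
      Polynomial.leadingCoeff_map_of_leadingCoeff_ne_zero _ hφ]
    exact hφ
  · obtain ⟨c, hc, hspec⟩ := exists_specTo_mem_radical kbar S₁ S₂
      fun p hp => (faithfullyFlat_matrixLocMap n _).mem_radical_span_of_map_mem (h p hp)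
    exact ⟨c, hc, fun φ hφ => hspec φ.toRingHom hφ⟩

/-- (Lemma 3.1(2) of the paper), in its two versions: over
`F(x)[X,1/det(X)]` and (respectively) over `F[X,1/det(X)]`: memberships of radicals of
finitely generated ideals are preserved by suitable specializations. -/
theorem radical_membership_specialization
    {Ω : Type*} [Field Ω] [IsAlgClosed Ω] [CharZero Ω]
    (k : Type*) [Field k] [Algebra k Ω]
    (kbar : Type*) [Field kbar] [Algebra k kbar] [IsAlgClosure k kbar]
    (D : Subalgebra k Ω) (hD : D.FG) (n : ℕ) (hn : 0 < n) :
    -- version over `F(x)[X,1/det(X)]`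
    (∀ S₁ S₂ : Finset (MatrixLoc n (FractionRing (Polynomial ↥D))),
      (∀ p ∈ S₁, embMLx D n p ∈ (Ideal.span (⇑(embMLx D n) '' ↑S₂)).radical) →
      ∃ c : ↥D, c ≠ 0 ∧ ∀ φ : ↥D →ₐ[k] kbar, φ c ≠ 0 →
        ∃ Φ : MatrixLoc n (FractionRing (Polynomial ↥D))
            → MatrixLoc n (FractionRing (Polynomial kbar)),
          (∀ p ∈ (S₁ : Set _) ∪ (S₂ : Set _),
            SpecTo n ((algebraMap (Polynomial kbar) (FractionRing (Polynomial kbar))).comp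
              (Polynomial.mapRingHom φ.toRingHom)) p (Φ p)) ∧
          ∀ p ∈ S₁, Φ p ∈ (Ideal.span (Φ '' ↑S₂)).radical) ∧
    -- version over `F[X,1/det(X)]`
    (∀ S₁ S₂ : Finset (MatrixLoc n (FractionRing ↥D)),
      (∀ p ∈ S₁, embML D n p ∈ (Ideal.span (⇑(embML D n) '' ↑S₂)).radical) →
      ∃ c : ↥D, c ≠ 0 ∧ ∀ φ : ↥D →ₐ[k] kbar, φ c ≠ 0 →
        ∃ Φ : MatrixLoc n (FractionRing ↥D) → MatrixLoc n kbar,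
          (∀ p ∈ (S₁ : Set _) ∪ (S₂ : Set _), SpecTo n φ.toRingHom p (Φ p)) ∧
          ∀ p ∈ S₁, Φ p ∈ (Ideal.span (Φ '' ↑S₂)).radical) :=
  radical_membership_specialization_general k kbar D n
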